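/- Let n ≥ 2 and let N be a permutation-invariant norm on ℝ^n. Then N((1/n)·(1,1,…,1) − e_1) ≤ ((n−1)/n)·N(e_1 − e_2), where e_1, e_2 are standard basis vectors; in particular this quantity is strictly smaller than N(e_1 − e_2). -/

import Mathlib

/-!
With `eₖ` the standard basis vectors, `(1/n)·(1,…,1) − eᵢ = (1/n) ∑ₖ (eₖ − eᵢ)`. The term `k = i`
vanishes and each of the other `n − 1` terms is, up to sign, the image of `eᵢ − eⱼ` under the
transposition `(j k)`, so by permutation invariance they all have norm `N(eᵢ − eⱼ)`. The triangle
inequality gives the bound, and it is strict because `N(eᵢ − eⱼ) > 0`.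
-/

def IsNorm {n : ℕ} (N : (Fin n → ℝ) → ℝ) : Prop :=
  (∀ x, N x = 0 ↔ x = 0) ∧
  (∀ (c : ℝ) (x : Fin n → ℝ), N (c • x) = |c| * N x) ∧
  (∀ x y : Fin n → ℝ, N (x + y) ≤ N x + N y)

def PermInvariant {n : ℕ} (N : (Fin n → ℝ) → ℝ) : Prop :=
  ∀ (σ : Equiv.Perm (Fin n)) (x : Fin n → ℝ), N (fun i => x (σ i)) = N x

variable {n : ℕ} {N : (Fin n → ℝ) → ℝ}

namespace IsNorm

theorem map_zero (hN : IsNorm N) : N 0 = 0 :=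
  (hN.1 0).2 rfl

theorem map_neg (hN : IsNorm N) (x : Fin n → ℝ) : N (-x) = N x := by
  simpa using hN.2.1 (-1) x

theorem nonneg (hN : IsNorm N) (x : Fin n → ℝ) : 0 ≤ N x := by
  have h := hN.2.2 x (-x)
  rw [add_neg_cancel, hN.map_zero, hN.map_neg] at h
  linarith

theorem pos (hN : IsNorm N) {x : Fin n → ℝ} (hx : x ≠ 0) : 0 < N x :=
  (hN.nonneg x).lt_of_ne fun h => hx ((hN.1 x).1 h.symm)

theorem map_sum_le (hN : IsNorm N) {ι : Type*} (s : Finset ι) (f : ι → Fin n → ℝ) :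
    N (∑ k ∈ s, f k) ≤ ∑ k ∈ s, N (f k) := by
  classical
  induction s using Finset.induction with
  | empty => simp [hN.map_zero]
  | insert k s hk ih =>
    rw [Finset.sum_insert hk, Finset.sum_insert hk]
    exact (hN.2.2 _ _).trans (by linarith)

end IsNorm

theorem center_sub_single_eq_smul_sum (i : Fin n) :
    ((1 : ℝ) / n) • (fun _ => (1 : ℝ)) - Pi.single i 1 =
      ((1 : ℝ) / n) • ∑ k, (Pi.single k (1 : ℝ) - Pi.single i 1) := by
  have hn : (n : ℝ) ≠ 0 := Nat.cast_ne_zero.2 (Fin.pos i).ne'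
  have hsum : ∑ k : Fin n, Pi.single k (1 : ℝ) = fun _ => 1 :=
    Finset.univ_sum_single fun _ => 1
  rw [Finset.sum_sub_distrib, hsum, Finset.sum_const, Finset.card_univ, Fintype.card_fin,
    smul_sub, ← Nat.cast_smul_eq_nsmul ℝ, smul_smul, one_div, inv_mul_cancel₀ hn, one_smul]

namespace PermInvariant

theorem map_single_sub_single_perm (hperm : PermInvariant N) (σ : Equiv.Perm (Fin n))
    (i j : Fin n) :
    N (Pi.single (σ i) 1 - Pi.single (σ j) 1) = N (Pi.single i 1 - Pi.single j 1) := by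
  rw [← hperm σ]
  change N ((Pi.single (σ i) 1 - Pi.single (σ j) 1) ∘ σ) = _
  rw [Pi.sub_comp, Pi.single_comp_equiv, Pi.single_comp_equiv]
  simp only [Equiv.symm_apply_apply]

theorem sum_map_single_sub_single (hN : IsNorm N) (hperm : PermInvariant N)
    {i j : Fin n} (hij : i ≠ j) :
    ∑ k, N (Pi.single k 1 - Pi.single i 1) =
      ((n : ℝ) - 1) * N (Pi.single i 1 - Pi.single j 1) := by
  have hterm : ∀ k ∈ Finset.univ.erase i,
      N (Pi.single k 1 - Pi.single i 1) = N (Pi.single i 1 - Pi.single j 1) := by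
    intro k hk
    have hki : k ≠ i := Finset.ne_of_mem_erase hk
    have hswap := map_single_sub_single_perm hperm (Equiv.swap j k) i j
    rw [Equiv.swap_apply_left, Equiv.swap_apply_of_ne_of_ne hij hki.symm] at hswap
    rw [← hN.map_neg, neg_sub, hswap]
  rw [← Finset.sum_erase _ (by rw [sub_self, hN.map_zero]), Finset.sum_congr rfl hterm,
    Finset.sum_const, Finset.card_erase_of_mem (Finset.mem_univ i), Finset.card_univ,
    Fintype.card_fin, nsmul_eq_mul, Nat.cast_pred (Fin.pos i)]

theorem map_center_sub_single_le (hN : IsNorm N) (hperm : PermInvariant N)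
    {i j : Fin n} (hij : i ≠ j) :
    N (((1 : ℝ) / n) • (fun _ => (1 : ℝ)) - Pi.single i 1) ≤
      (((n : ℝ) - 1) / n) * N (Pi.single i 1 - Pi.single j 1) :=
  calc N (((1 : ℝ) / n) • (fun _ => (1 : ℝ)) - Pi.single i 1)
      = (1 / n) * N (∑ k, (Pi.single k (1 : ℝ) - Pi.single i 1)) := by
        rw [center_sub_single_eq_smul_sum, hN.2.1, abs_of_nonneg (by positivity)]
    _ ≤ (1 / n) * ∑ k, N (Pi.single k 1 - Pi.single i 1) := by
        gcongr
        exact hN.map_sum_le _ _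
    _ = (((n : ℝ) - 1) / n) * N (Pi.single i 1 - Pi.single j 1) := by
        rw [sum_map_single_sub_single hN hperm hij]
        ring

end PermInvariant

/-- For a permutation-invariant norm `N` on `ℝ^n` (`n ≥ 2`) one has
`N((1/n)·(1,…,1) − e₁) ≤ ((n−1)/n)·N(e₁ − e₂) < N(e₁ − e₂)`. -/
theorem center_dist_le_of_permInvariant (n : ℕ) (hn : 2 ≤ n)
    (N : (Fin n → ℝ) → ℝ) (hN : IsNorm N) (hperm : PermInvariant N) :
    N (((1 : ℝ) / n) • (fun _ => (1 : ℝ)) - Pi.single (⟨0, by omega⟩ : Fin n) 1) ≤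
        (((n : ℝ) - 1) / n) *
          N (Pi.single (⟨0, by omega⟩ : Fin n) 1 - Pi.single (⟨1, by omega⟩ : Fin n) 1) ∧
      N (((1 : ℝ) / n) • (fun _ => (1 : ℝ)) - Pi.single (⟨0, by omega⟩ : Fin n) 1) <
        N (Pi.single (⟨0, by omega⟩ : Fin n) 1 - Pi.single (⟨1, by omega⟩ : Fin n) 1) := by
  have h01 : (⟨0, by omega⟩ : Fin n) ≠ ⟨1, by omega⟩ := by simp
  have hle := hperm.map_center_sub_single_le hN h01
  refine ⟨hle, hle.trans_lt ?_⟩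
  have hpos : 0 < N (Pi.single (⟨0, by omega⟩ : Fin n) 1 - Pi.single ⟨1, by omega⟩ 1) :=
    hN.pos (sub_ne_zero.2 fun h => by simpa [h01] using congrFun h ⟨0, by omega⟩)
  have hfrac : ((n : ℝ) - 1) / n < 1 := by
    rw [div_lt_one (by positivity)]
    linarith
  exact mul_lt_of_lt_one_left hpos hfrac
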